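/- Let (X,d) be a sequentially Yoneda-complete T1 bounded quasi-metric space, and let I ∈ CBX with r̄I = 0 and representation (F_n). Then I⁺ equals the set of all b ∈ BX such that b is the least upper bound in (BX, ⊑) of some ⊑-ascending sequence (a_n)_{n>0} with a_n ∈ F_n for all n. -/

import Mathlib

open scoped NNReal

/-! Generic sequence notions for an arbitrary "distance" function `ρ`. -/

def IsCauchySeq {α : Type _} (ρ : α → α → ℝ) (u : ℕ → α) : Prop :=
  ∀ ε : ℝ, 0 < ε → ∃ N, ∀ n m, N ≤ n → n ≤ m → ρ (u n) (u m) < ε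

def IsBiCauchySeq {α : Type _} (ρ : α → α → ℝ) (u : ℕ → α) : Prop :=
  ∀ ε : ℝ, 0 < ε → ∃ N, ∀ n m, N ≤ n → N ≤ m → ρ (u n) (u m) < ε

/-- `sup_{m ≥ n} ρ (u m) y`. -/
noncomputable def supTail {α : Type _} (ρ : α → α → ℝ) (u : ℕ → α) (y : α) (n : ℕ) : ℝ :=
  sSup {t | ∃ m, n ≤ m ∧ t = ρ (u m) y}

/-- `x` is a Yoneda limit of `u`:  `ρ x y = inf_n sup_{m ≥ n} ρ (u m) y` for all `y`. -/
def IsYonedaLim {α : Type _} (ρ : α → α → ℝ) (u : ℕ → α) (x : α) : Prop :=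
  ∀ y, ρ x y = sInf (Set.range (supTail ρ u y))

def SeqYonedaCompleteD {α : Type _} (ρ : α → α → ℝ) : Prop :=
  ∀ u, IsCauchySeq ρ u → ∃ x, IsYonedaLim ρ u x

/-- Smyth completeness: every Cauchy sequence converges in the symmetrized metric. -/
def SmythCompleteD {α : Type _} (ρ : α → α → ℝ) : Prop :=
  ∀ u, IsCauchySeq ρ u → ∃ x, ∀ ε : ℝ, 0 < ε → ∃ N, ∀ n, N ≤ n →
    max (ρ x (u n)) (ρ (u n) x) < ε

/-- `inf_{m ≥ n} ρ e (u m)`. -/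
noncomputable def infTail {α : Type _} (ρ : α → α → ℝ) (u : ℕ → α) (e : α) (n : ℕ) : ℝ :=
  sInf {t | ∃ m, n ≤ m ∧ t = ρ e (u m)}

/-- `e` is a finite point: for every Cauchy sequence `u` with Yoneda limit `x`,
`ρ e x = sup_n inf_{m ≥ n} ρ e (u m)`. -/
def IsFinitePoint {α : Type _} (ρ : α → α → ℝ) (e : α) : Prop :=
  ∀ u x, IsCauchySeq ρ u → IsYonedaLim ρ u x →
    ρ e x = sSup (Set.range (infTail ρ u e))

/-- ω-algebraic: a countable set of finite points such that every point is a Yoneda limit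
of a Cauchy sequence of points from it. -/
def OmegaAlgebraicD {α : Type _} (ρ : α → α → ℝ) : Prop :=
  ∃ X0 : Set α, X0.Countable ∧ (∀ e ∈ X0, IsFinitePoint ρ e) ∧
    ∀ x, ∃ u : ℕ → α, (∀ n, u n ∈ X0) ∧ IsCauchySeq ρ u ∧ IsYonedaLim ρ u x

/-- A quasi-metric on `X`. -/
structure QuasiMetric (X : Type _) : Type _ where
  d : X → X → ℝ
  nonneg : ∀ x y, 0 ≤ d x y
  triangle : ∀ x y z, d x z ≤ d x y + d y z
  eq_iff : ∀ x y, x = y ↔ d x y = 0 ∧ d y x = 0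

/-- Formal balls over `X`. -/
abbrev FB (X : Type _) := X × ℝ≥0

/-- Nonempty finite subsets of the space of formal balls. -/
def PFin (X : Type _) : Type _ := {F : Set (FB X) // F.Finite ∧ F.Nonempty}

namespace QuasiMetric

variable {X : Type _} (Q : QuasiMetric X)

def IsT1 : Prop := ∀ x y, Q.d x y = 0 → x = y

def Bounded : Prop := ∃ C : ℝ, ∀ x y, Q.d x y ≤ C

def ball (x : X) (ε : ℝ) : Set X := {y | Q.d x y < ε}

/-- The topology `τ_d` induced by the quasi-metric. -/
def tau : TopologicalSpace X :=
  TopologicalSpace.generateFrom {s | ∃ x ε, 0 < ε ∧ s = Q.ball x ε}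

def dstar (x y : X) : ℝ := max (Q.d x y) (Q.d y x)

def SeqYonedaComplete : Prop := SeqYonedaCompleteD Q.d

def SmythComplete : Prop := SmythCompleteD Q.d

/-- `K` is `d⁻¹`-precompact. -/
def dInvPrecompact (K : Set X) : Prop :=
  ∀ ε : ℝ, 0 < ε → ∃ F : Set X, F.Finite ∧ F ⊆ K ∧ ∀ k ∈ K, ∃ x ∈ F, Q.d k x < ε

/-- The nonempty compact subsets of `(X, τ_d)`. -/
def K0 : Set (Set X) := {K | K.Nonempty ∧ @IsCompact X Q.tau K}

noncomputable def dPtSet (x : X) (B : Set X) : ℝ := sInf {t | ∃ b ∈ B, t = Q.d x b}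

noncomputable def dSetPt (A : Set X) (y : X) : ℝ := sInf {t | ∃ a ∈ A, t = Q.d a y}

/-- The Hausdorff quasi-metric. -/
noncomputable def Hd (A B : Set X) : ℝ :=
  max (sSup {t | ∃ b ∈ B, t = Q.dSetPt A b}) (sSup {t | ∃ a ∈ A, t = Q.dPtSet a B})

/-- Order on formal balls: `(x,r) ⊑ (y,s)  ↔  d x y ≤ r - s`. -/
def ble (a b : FB X) : Prop := Q.d a.1 b.1 ≤ (a.2 : ℝ) - (b.2 : ℝ)

/-- Auxiliary relation: `(x,r) ≺ (y,s)  ↔  d x y < r - s`. -/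
def blt (a b : FB X) : Prop := Q.d a.1 b.1 < (a.2 : ℝ) - (b.2 : ℝ)

def iota (x : X) : FB X := (x, 0)

/-- The quasi-metric `q` on formal balls. -/
noncomputable def q (a b : FB X) : ℝ :=
  max (Q.d a.1 b.1) |(a.2 : ℝ) - (b.2 : ℝ)| + ((b.2 : ℝ) - (a.2 : ℝ))

/-- The Egli–Milner relation `≺_EM` on nonempty finite sets of formal balls. -/
def em (F G : PFin X) : Prop :=
  (∀ b ∈ G.1, ∃ a ∈ F.1, Q.blt a b) ∧ (∀ a ∈ F.1, ∃ b ∈ G.1, Q.blt a b)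

/-- The non-strict Egli–Milner relation `⊑_EM`. -/
def emLE (F G : PFin X) : Prop :=
  (∀ a ∈ F.1, ∃ b ∈ G.1, Q.ble a b) ∧ (∀ b ∈ G.1, ∃ a ∈ F.1, Q.ble a b)

/-- `rF = max { r : (x,r) ∈ F }`. -/
noncomputable def rF (F : PFin X) : ℝ := sSup {t | ∃ p ∈ F.1, t = (p.2 : ℝ)}

/-- `δ(F,G) = min {(r-s) - d x y : (x,r) ∈ F, (y,s) ∈ G, (x,r) ≺ (y,s)}`. -/
noncomputable def delta (F G : PFin X) : ℝ :=
  sInf {t | ∃ a ∈ F.1, ∃ b ∈ G.1, Q.blt a b ∧ t = ((a.2 : ℝ) - (b.2 : ℝ)) - Q.d a.1 b.1}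

/-- The Hausdorff quasi-metric `H_q` on `P_fin(BX)` induced by `q`. -/
noncomputable def Hq (F G : PFin X) : ℝ :=
  max (sSup {t | ∃ a ∈ F.1, t = sInf {s | ∃ b ∈ G.1, s = Q.q a b}})
      (sSup {t | ∃ b ∈ G.1, t = sInf {s | ∃ a ∈ F.1, s = Q.q a b}})

/-- ω-chains in `(P_fin(BX), ≺_EM)`; `c n` plays the role of `F_{n+1}`. -/
def Chain : Type _ := {c : ℕ → PFin X // ∀ n, Q.em (c n) (c (n + 1))}

def chainLE (c c' : Q.Chain) : Prop := ∀ n, ∃ m, Q.em (c.1 n) (c'.1 m)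

def chainEquiv (c c' : Q.Chain) : Prop := Q.chainLE c c' ∧ Q.chainLE c' c

lemma blt_trans {a b c : FB X} (h1 : Q.blt a b) (h2 : Q.blt b c) : Q.blt a c := by
  have h3 := Q.triangle a.1 b.1 c.1
  unfold blt at h1 h2 ⊢
  linarith

lemma em_trans {F G H : PFin X} (h1 : Q.em F G) (h2 : Q.em G H) : Q.em F H := by
  constructor
  · intro b hb
    obtain ⟨a, ha, hab⟩ := h2.1 b hb
    obtain ⟨a', ha', h'⟩ := h1.1 a ha
    exact ⟨a', ha', Q.blt_trans h' hab⟩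
  · intro a ha
    obtain ⟨b, hb, hab⟩ := h1.2 a ha
    obtain ⟨c, hc, hbc⟩ := h2.2 b hb
    exact ⟨c, hc, Q.blt_trans hab hbc⟩

lemma chainLE_refl (c : Q.Chain) : Q.chainLE c c := fun n => ⟨n + 1, c.2 n⟩

lemma chainLE_trans {a b c : Q.Chain} (h1 : Q.chainLE a b) (h2 : Q.chainLE b c) :
    Q.chainLE a c := by
  intro n
  obtain ⟨m, hm⟩ := h1 n
  obtain ⟨k, hk⟩ := h2 m
  exact ⟨k, Q.em_trans hm hk⟩

def chainSetoid : Setoid Q.Chain where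
  r := Q.chainEquiv
  iseqv := ⟨fun c => ⟨Q.chainLE_refl c, Q.chainLE_refl c⟩,
    fun h => ⟨h.2, h.1⟩,
    fun h1 h2 => ⟨Q.chainLE_trans h1.1 h2.1, Q.chainLE_trans h2.2 h1.2⟩⟩

/-- The ω-Plotkin domain `CBX`: equivalence classes of ω-chains in `(P_fin(BX), ≺_EM)`. -/
def CBX : Type _ := Quotient Q.chainSetoid

/-- The partial order of `CBX`. -/
def cbLE : Q.CBX → Q.CBX → Prop :=
  Quotient.lift₂ Q.chainLE (by
    intro a b a' b' ha hb
    have ha' : Q.chainEquiv a a' := ha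
    have hb' : Q.chainEquiv b b' := hb
    exact propext ⟨fun h => Q.chainLE_trans (Q.chainLE_trans ha'.2 h) hb'.1,
      fun h => Q.chainLE_trans (Q.chainLE_trans ha'.1 h) hb'.2⟩)

def chainWB (c c' : Q.Chain) : Prop := ∃ m, ∀ n, Q.em (c.1 n) (c'.1 m)

/-- The way-below relation of `CBX`. -/
def cbWB : Q.CBX → Q.CBX → Prop :=
  Quotient.lift₂ Q.chainWB (by
    intro a b a' b' ha hb
    have ha' : Q.chainEquiv a a' := ha
    have hb' : Q.chainEquiv b b' := hb
    apply propext
    constructor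
    · rintro ⟨m, hm⟩
      obtain ⟨k, hk⟩ := hb'.1 m
      refine ⟨k, fun n => ?_⟩
      obtain ⟨p, hp⟩ := ha'.2 n
      exact Q.em_trans hp (Q.em_trans (hm p) hk)
    · rintro ⟨m, hm⟩
      obtain ⟨k, hk⟩ := hb'.2 m
      refine ⟨k, fun n => ?_⟩
      obtain ⟨p, hp⟩ := ha'.1 n
      exact Q.em_trans hp (Q.em_trans (hm p) hk))

/-- The Scott topology of `CBX`, generated by the sets `↟I`. -/
def scottTop : TopologicalSpace Q.CBX :=
  TopologicalSpace.generateFrom {s | ∃ I : Q.CBX, s = {J | Q.cbWB I J}}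

def upSet (F : PFin X) : Set (FB X) := {b | ∃ a ∈ F.1, Q.ble a b}

/-- `I⁺ = ⋂_n ↑F_n` for a representing chain. -/
def Iplus (c : Q.Chain) : Set (FB X) := ⋂ n, Q.upSet (c.1 n)

noncomputable def IplusQ (I : Q.CBX) : Set (FB X) := Q.Iplus (Quotient.out I)

/-- `r̄ I = inf { rF : F occurs in some chain representing I }`. -/
noncomputable def rbar (I : Q.CBX) : ℝ :=
  sInf {t | ∃ c : Q.Chain, Quotient.mk Q.chainSetoid c = I ∧ ∃ n, t = rF (c.1 n)}

/-- `c` is a standard representation of `K`: `c n` (playing the role of `F_{n+1}`) is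
`{(x_i^j, 1/(n+1)) : 1 ≤ j ≤ n+1, 1 ≤ i ≤ m_j}` where the `x_i^j ∈ K` satisfy
`∀ y ∈ K, ∃ i, d (x_i^j) y < 1/(2 j²)`. -/
def IsStdRep (K : Set X) (c : Q.Chain) : Prop :=
  ∃ (m : ℕ → ℕ) (x : ℕ → ℕ → X),
    (∀ j i, 1 ≤ j → 1 ≤ i → i ≤ m j → x j i ∈ K) ∧
    (∀ j, 1 ≤ j → ∀ y ∈ K, ∃ i, 1 ≤ i ∧ i ≤ m j ∧ Q.d (x j i) y < 1 / (2 * (j : ℝ) ^ 2)) ∧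
    (∀ n : ℕ, (c.1 n).1 =
      {p : FB X | ∃ j i, 1 ≤ j ∧ j ≤ n + 1 ∧ 1 ≤ i ∧ i ≤ m j ∧
        p = (x j i, ((n : ℝ≥0) + 1)⁻¹)})

/-- `D` on representing chains: `sup_n inf_m H_q(F_n, G_m)`. -/
noncomputable def Dchain (c c' : Q.Chain) : ℝ :=
  sSup {t | ∃ n, t = sInf {s | ∃ m, s = Q.Hq (c.1 n) (c'.1 m)}}

/-- The quasi-metric `D` on `CBX`. -/
noncomputable def D (I J : Q.CBX) : ℝ := Q.Dchain (Quotient.out I) (Quotient.out J)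

/-- The topology induced by `D` on `CBX`. -/
def DTop : TopologicalSpace Q.CBX :=
  TopologicalSpace.generateFrom
    {s | ∃ (I : Q.CBX) (ε : ℝ), 0 < ε ∧ s = {J | Q.D I J < ε}}

/-- The hyperspace `K_0(X)` as a type. -/
def K0T : Type _ := {K : Set X // K.Nonempty ∧ @IsCompact X Q.tau K}

/-- The Vietoris topology on `K_0(X)`. -/
def vietoris : TopologicalSpace Q.K0T :=
  TopologicalSpace.generateFrom
    ({s | ∃ V : Set X, @IsOpen X Q.tau V ∧ s = {K : Q.K0T | (K.1 ∩ V).Nonempty}} ∪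
     {s | ∃ V : Set X, @IsOpen X Q.tau V ∧ s = {K : Q.K0T | K.1 ⊆ V}})

/-- The topology of the Hausdorff quasi-metric on `K_0(X)`. -/
def hdTop : TopologicalSpace Q.K0T :=
  TopologicalSpace.generateFrom
    {s | ∃ (K : Q.K0T) (ε : ℝ), 0 < ε ∧ s = {L : Q.K0T | Q.Hd K.1 L.1 < ε}}

/-- Round ideals of `(P_fin(BX), ≺_EM)`. -/
def IsRoundIdeal (I : Set (PFin X)) : Prop :=
  I.Nonempty ∧ (∀ F G : PFin X, Q.em F G → G ∈ I → F ∈ I) ∧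
  (∀ F ∈ I, ∀ G ∈ I, ∃ H ∈ I, Q.em F H ∧ Q.em G H)

end QuasiMetric

/-! If `b ∈ I⁺`, Kőnig's lemma applied to the finitely branching `≺`-paths through the levels
`F_n` that end below `b` yields a `≺`-ascending sequence `a_n ∈ F_n` bounded by `b`. Since
`r̄I = 0`, some level `F_m` lies `≺`-above a set of arbitrarily small radius, so the radii of the
`a_n` tend to `0`. Their centres then form a Cauchy sequence whose Yoneda limit `z` satisfies
`d z y = 0` for the centre `y` of every upper bound; by `T1` this forces `z` to be the centre of
`b`, and all upper bounds have radius `0`, so `b` is the least upper bound. -/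

theorem Set.Finite.exists_forall_of_antitone {α : Type*} {S : Set α} (hS : S.Finite)
    {P : ℕ → α → Prop} (hP : ∀ a, Antitone (P · a)) (hex : ∀ m, ∃ a ∈ S, P m a) :
    ∃ a ∈ S, ∀ m, P m a := by
  choose g hgS hgP using hex
  have : Finite S := hS
  obtain ⟨a, ha⟩ := Finite.exists_infinite_fiber fun m => (⟨g m, hgS m⟩ : S)
  refine ⟨a, a.2, fun m => ?_⟩
  obtain ⟨k, hk, hmk⟩ := (Set.infinite_coe_iff.1 ha).exists_gt m
  have hgk : g k = a := congrArg Subtype.val hk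
  exact hP a hmk.le (hgk ▸ hgP k)

theorem exists_seq_of_forall_exists_succ {α : Type*} {G : ℕ → Set α} {R : α → α → Prop}
    (h0 : (G 0).Nonempty) (h : ∀ n, ∀ a ∈ G n, ∃ a' ∈ G (n + 1), R a a') :
    ∃ f : ℕ → α, (∀ n, f n ∈ G n) ∧ ∀ n, R (f n) (f (n + 1)) := by
  choose next hnext hR using h
  let g : ∀ n, G n := fun n =>
    Nat.rec ⟨h0.some, h0.some_mem⟩ (fun n a => ⟨next n a a.2, hnext n a a.2⟩) n
  exact ⟨fun n => (g n).1, fun n => (g n).2, fun n => hR n (g n).1 (g n).2⟩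

theorem IsYonedaLim.le {α : Type*} {ρ : α → α → ℝ} (hρ : ∀ x y, 0 ≤ ρ x y) {u : ℕ → α}
    {x y : α} (hx : IsYonedaLim ρ u x) {C : ℕ → ℝ} (hC : ∀ n m, n ≤ m → ρ (u m) y ≤ C n)
    (n : ℕ) : ρ x y ≤ C n := by
  have hbdd : ∀ k, BddAbove {t | ∃ m, k ≤ m ∧ t = ρ (u m) y} := fun k =>
    ⟨C k, by rintro _ ⟨m, hkm, rfl⟩; exact hC k m hkm⟩
  have hmem : ∀ k, ρ (u k) y ∈ {t | ∃ m, k ≤ m ∧ t = ρ (u m) y} := fun k => ⟨k, le_rfl, rfl⟩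
  calc ρ x y = sInf (Set.range (supTail ρ u y)) := hx y
    _ ≤ supTail ρ u y n := csInf_le ⟨0, ?_⟩ (Set.mem_range_self n)
    _ ≤ C n := csSup_le ⟨_, hmem n⟩ ?_
  · rintro _ ⟨k, rfl⟩
    exact (hρ _ _).trans (le_csSup (hbdd k) (hmem k))
  · rintro _ ⟨m, hnm, rfl⟩
    exact hC n m hnm

namespace QuasiMetric

variable {X : Type _} {Q : QuasiMetric X}

theorem d_self (x : X) : Q.d x x = 0 := ((Q.eq_iff x x).1 rfl).1

theorem ble_refl (a : FB X) : Q.ble a a := by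
  simp [ble, d_self]

theorem ble.trans {a b c : FB X} (hab : Q.ble a b) (hbc : Q.ble b c) : Q.ble a c := by
  unfold ble at *
  linarith [Q.triangle a.1 b.1 c.1]

theorem blt.le {a b : FB X} (h : Q.blt a b) : Q.ble a b := le_of_lt h

theorem ble.radius_le {a b : FB X} (h : Q.ble a b) : (b.2 : ℝ) ≤ a.2 := by
  unfold ble at h
  linarith [Q.nonneg a.1 b.1]

theorem blt.radius_lt {a b : FB X} (h : Q.blt a b) : (b.2 : ℝ) < a.2 := by
  unfold blt at h
  linarith [Q.nonneg a.1 b.1]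

theorem radius_le_rF {F : PFin X} {p : FB X} (hp : p ∈ F.1) : (p.2 : ℝ) ≤ rF F :=
  le_csSup ((F.2.1.image fun q : FB X => (q.2 : ℝ)).bddAbove.mono
    (by rintro _ ⟨q, hq, rfl⟩; exact ⟨q, hq, rfl⟩)) ⟨p, hp, rfl⟩

theorem ble_of_le {a : ℕ → FB X} (ha : ∀ n, Q.ble (a n) (a (n + 1))) {n m : ℕ}
    (hnm : n ≤ m) : Q.ble (a n) (a m) := by
  induction m, hnm using Nat.le_induction with
  | base => exact ble_refl _
  | succ m _ ih => exact ih.trans (ha m)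

theorem isCauchySeq_fst {a : ℕ → FB X} (ha : ∀ n, Q.ble (a n) (a (n + 1)))
    (hr : ∀ ε : ℝ, 0 < ε → ∃ n, ((a n).2 : ℝ) < ε) : IsCauchySeq Q.d fun n => (a n).1 := by
  intro ε hε
  obtain ⟨N, hN⟩ := hr ε hε
  refine ⟨N, fun n m hNn hnm => ?_⟩
  have h : Q.d (a n).1 (a m).1 ≤ (a n).2 - (a m).2 := ble_of_le ha hnm
  linarith [(ble_of_le ha hNn).radius_le, (a m).2.coe_nonneg]

theorem le_zero_of_forall_le_radius {a : ℕ → FB X}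
    (hr : ∀ ε : ℝ, 0 < ε → ∃ n, ((a n).2 : ℝ) < ε) {t : ℝ} (ht : ∀ n, t ≤ (a n).2) : t ≤ 0 :=
  le_of_forall_pos_lt_add fun ε hε => by
    obtain ⟨n, hn⟩ := hr ε hε
    linarith [ht n]

theorem d_yonedaLim_eq_zero {a : ℕ → FB X} (ha : ∀ n, Q.ble (a n) (a (n + 1)))
    (hr : ∀ ε : ℝ, 0 < ε → ∃ n, ((a n).2 : ℝ) < ε) {z : X}
    (hz : IsYonedaLim Q.d (fun n => (a n).1) z) {v : FB X} (hv : ∀ n, Q.ble (a n) v) :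
    Q.d z v.1 = 0 := by
  refine le_antisymm (le_zero_of_forall_le_radius hr (hz.le Q.nonneg fun n m hnm => ?_))
    (Q.nonneg _ _)
  have h : Q.d (a m).1 v.1 ≤ (a m).2 - v.2 := hv m
  linarith [(ble_of_le ha hnm).radius_le, v.2.coe_nonneg]

theorem ble_of_forall_ble (hT1 : Q.IsT1) (hY : Q.SeqYonedaComplete) {a : ℕ → FB X}
    (ha : ∀ n, Q.ble (a n) (a (n + 1))) (hr : ∀ ε : ℝ, 0 < ε → ∃ n, ((a n).2 : ℝ) < ε)
    {b b' : FB X} (hb : ∀ n, Q.ble (a n) b) (hb' : ∀ n, Q.ble (a n) b') : Q.ble b b' := by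
  obtain ⟨z, hz⟩ := hY _ (isCauchySeq_fst ha hr)
  have hzb : z = b.1 := hT1 _ _ (d_yonedaLim_eq_zero ha hr hz hb)
  have hb'0 : (b'.2 : ℝ) ≤ 0 := le_zero_of_forall_le_radius hr fun n => (hb' n).radius_le
  show Q.d b.1 b'.1 ≤ b.2 - b'.2
  rw [← hzb, d_yonedaLim_eq_zero ha hr hz hb']
  linarith [b.2.coe_nonneg]

def ReachesBelow (c : Q.Chain) (b : FB X) : ℕ → ℕ → FB X → Prop
  | 0, _, a => Q.ble a b
  | m + 1, n, a => ∃ a' ∈ (c.1 (n + 1)).1, Q.blt a a' ∧ ReachesBelow c b m (n + 1) a'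

theorem reachesBelow_antitone (c : Q.Chain) (b : FB X) (n : ℕ) (a : FB X) :
    Antitone fun m => ReachesBelow c b m n a := by
  suffices ∀ m n a, ReachesBelow c b (m + 1) n a → ReachesBelow c b m n a from
    antitone_nat_of_succ_le fun m => this m n a
  intro m
  induction m with
  | zero => rintro n a ⟨a', -, haa', ha'b⟩; exact haa'.le.trans ha'b
  | succ m ih => rintro n a ⟨a', ha', haa', hR⟩; exact ⟨a', ha', haa', ih _ _ hR⟩

theorem exists_reachesBelow {c : Q.Chain} {b : FB X} (hb : b ∈ Q.Iplus c) (m : ℕ) :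
    ∀ n, ∃ a ∈ (c.1 n).1, ReachesBelow c b m n a := by
  induction m with
  | zero => exact fun n => Set.mem_iInter.1 hb n
  | succ m ih =>
    intro n
    obtain ⟨a', ha', hR⟩ := ih (n + 1)
    obtain ⟨a, ha, haa'⟩ := (c.2 n).1 a' ha'
    exact ⟨a, ha, a', ha', haa', hR⟩

theorem exists_blt_seq_of_mem_Iplus {c : Q.Chain} {b : FB X} (hb : b ∈ Q.Iplus c) :
    ∃ a : ℕ → FB X, (∀ n, a n ∈ (c.1 n).1) ∧ (∀ n, Q.blt (a n) (a (n + 1))) ∧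
      ∀ n, Q.ble (a n) b := by
  let G : ℕ → Set (FB X) := fun n => {p | p ∈ (c.1 n).1 ∧ ∀ m, ReachesBelow c b m n p}
  have hG0 : (G 0).Nonempty :=
    (c.1 0).2.1.exists_forall_of_antitone (reachesBelow_antitone c b 0)
      (fun m => exists_reachesBelow hb m 0)
  obtain ⟨a, haG, hlt⟩ := exists_seq_of_forall_exists_succ (R := Q.blt) hG0 (by
    rintro n p ⟨-, hp⟩
    have hfin : {q | q ∈ (c.1 (n + 1)).1 ∧ Q.blt p q}.Finite :=
      (c.1 (n + 1)).2.1.subset fun q hq => hq.1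
    obtain ⟨q, ⟨hq, hpq⟩, hRq⟩ := hfin.exists_forall_of_antitone
      (reachesBelow_antitone c b (n + 1)) fun m => by
        obtain ⟨q, hq, hpq, hR⟩ := hp (m + 1)
        exact ⟨q, ⟨hq, hpq⟩, hR⟩
    exact ⟨q, ⟨hq, hRq⟩, hpq⟩)
  exact ⟨a, fun n => (haG n).1, hlt, fun n => (haG n).2 0⟩

theorem exists_radius_lt_of_rbar_eq_zero {I : Q.CBX} (hr : Q.rbar I = 0) {c : Q.Chain}
    (hrep : Quotient.mk Q.chainSetoid c = I) {a : ℕ → FB X} (ha : ∀ n, a n ∈ (c.1 n).1)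
    {ε : ℝ} (hε : 0 < ε) : ∃ n, ((a n).2 : ℝ) < ε := by
  obtain ⟨_, ⟨c', hc', n, rfl⟩, hn⟩ :=
    exists_lt_of_csInf_lt (by exact ⟨_, c, hrep, 0, rfl⟩) (show Q.rbar I < ε by rwa [hr])
  obtain ⟨m, hm⟩ := (Quotient.exact (hc'.trans hrep.symm) : Q.chainEquiv c' c).1 n
  obtain ⟨p, hp, hpa⟩ := hm.1 (a m) (ha m)
  exact ⟨m, hpa.radius_lt.trans ((radius_le_rF hp).trans_lt hn)⟩

end QuasiMetric

theorem stmt5_general {X : Type} (Q : QuasiMetric X) (hT1 : Q.IsT1)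
    (hY : Q.SeqYonedaComplete) (I : Q.CBX) (hr : Q.rbar I = 0) (c : Q.Chain)
    (hrep : Quotient.mk Q.chainSetoid c = I) :
    Q.Iplus c = {b : FB X | ∃ a : ℕ → FB X, (∀ n, a n ∈ (c.1 n).1) ∧
      (∀ n, Q.ble (a n) (a (n + 1))) ∧ (∀ n, Q.ble (a n) b) ∧
      ∀ b', (∀ n, Q.ble (a n) b') → Q.ble b b'} := by
  ext b
  constructor
  · intro hb
    obtain ⟨a, hmem, hlt, hle⟩ := QuasiMetric.exists_blt_seq_of_mem_Iplus hb
    have hasc : ∀ n, Q.ble (a n) (a (n + 1)) := fun n => (hlt n).le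
    have hr0 : ∀ ε : ℝ, 0 < ε → ∃ n, ((a n).2 : ℝ) < ε := fun ε hε =>
      QuasiMetric.exists_radius_lt_of_rbar_eq_zero hr hrep hmem hε
    exact ⟨a, hmem, hasc, hle, fun b' hb' => QuasiMetric.ble_of_forall_ble hT1 hY hasc hr0 hle hb'⟩
  · rintro ⟨a, hmem, -, hle, -⟩
    exact Set.mem_iInter.2 fun n => ⟨a n, hmem n, hle n⟩

/-- if `r̄I = 0` and `(F_n)` represents `I` then `I⁺` is the set of least upper
bounds of ⊑-ascending sequences `(a_n)` with `a_n ∈ F_n`. -/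
theorem stmt5 {X : Type} (Q : QuasiMetric X) (hT1 : Q.IsT1) (hB : Q.Bounded)
    (hY : Q.SeqYonedaComplete) (I : Q.CBX) (hr : Q.rbar I = 0) (c : Q.Chain)
    (hrep : Quotient.mk Q.chainSetoid c = I) :
    Q.Iplus c = {b : FB X | ∃ a : ℕ → FB X, (∀ n, a n ∈ (c.1 n).1) ∧
      (∀ n, Q.ble (a n) (a (n + 1))) ∧ (∀ n, Q.ble (a n) b) ∧
      ∀ b', (∀ n, Q.ble (a n) b') → Q.ble b b'} :=
  stmt5_general Q hT1 hY I hr c hrep
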